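/- Let S be a set of edges of G, let c_max (respectively c_min) be the largest (respectively smallest) cardinality of the intersection of S with the edge set of a spanning tree of G, taken over all spanning trees of G. Then for any two states i, j, |∑_{{m,n}∈S} ∂ ln(π_i/π_j) / ∂B_mn| ≤ (c_max - c_min) tanh(F_{i↔j}/4). -/

import Mathlib

open Finset

attribute [local instance] Classical.propDecidable

/-- The transition graph of a rate matrix: an edge between `i ≠ j` whenever
both rates are positive. -/
def transGraph {V : Type*} (W : V → V → ℝ) : SimpleGraph V where
  Adj i j := i ≠ j ∧ 0 < W i j ∧ 0 < W j i
  symm := ⟨fun i j ⟨h, h1, h2⟩ => ⟨h.symm, h2, h1⟩⟩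
  loopless := ⟨fun i ⟨h, _, _⟩ => h rfl⟩

/-- `T` is a spanning tree of `G`. -/
def IsSpanningTree {V : Type*} (G T : SimpleGraph V) : Prop := T ≤ G ∧ T.IsTree

/-- Weight of spanning tree `T` rooted at `r`: product over the edges of `T`,
each directed towards `r`, of the corresponding rate (`W i j` is the rate of
the jump `j → i`). -/
noncomputable def treeWeight {V : Type*} [Fintype V] (W : V → V → ℝ)
    (T : SimpleGraph V) (r : V) : ℝ :=
  ∏ p ∈ Finset.univ.filter
      (fun p : V × V => T.Adj p.1 p.2 ∧ T.dist p.2 r + 1 = T.dist p.1 r),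
    W p.2 p.1

/-- Sum of rooted-tree weights over all spanning trees of `G`, rooted at `k`. -/
noncomputable def sumTrees {V : Type*} [Fintype V] [DecidableEq V] (W : V → V → ℝ)
    (G : SimpleGraph V) (k : V) : ℝ :=
  ∑ T ∈ Finset.univ.filter (fun T : SimpleGraph V => IsSpanningTree G T),
    treeWeight W T k

/-- Steady state via matrix-tree formula. -/
noncomputable def mttPi {V : Type*} [Fintype V] [DecidableEq V] (W : V → V → ℝ)
    (G : SimpleGraph V) (k : V) : ℝ :=
  sumTrees W G k / ∑ l : V, sumTrees W G l

/-- Weight of a walk: product of the rates of its directed edges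
(a step `a → b` has rate `W b a`). -/
noncomputable def walkWeight {V : Type*} (W : V → V → ℝ) {G : SimpleGraph V} {u v : V}
    (p : G.Walk u v) : ℝ :=
  (p.darts.map (fun d => W d.snd d.fst)).prod

/-- Cycle force of a closed walk. -/
noncomputable def cycleForce {V : Type*} (W : V → V → ℝ) {G : SimpleGraph V} {u : V}
    (p : G.Walk u u) : ℝ :=
  Real.log (walkWeight W p / walkWeight W p.reverse)

/-- `Fmax`: the maximum of `|F_C|` over cycles `C` of `G` containing the
edge `{m,n}`; `0` if there is none. -/
noncomputable def Fmax {V : Type*} (W : V → V → ℝ) (G : SimpleGraph V) (m n : V) : ℝ :=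
  sSup {x : ℝ | ∃ (u : V) (p : G.Walk u u), p.IsCycle ∧ s(m, n) ∈ p.edges ∧
    x = |cycleForce W p|}

/-- `F_{i↔j}`: the maximum entropy produced going from `i` to `j` and back
along non-self-intersecting paths. -/
noncomputable def Fbtw {V : Type*} (W : V → V → ℝ) (G : SimpleGraph V) (i j : V) : ℝ :=
  sSup {x : ℝ | ∃ (p : G.Walk i j) (q : G.Walk j i), p.IsPath ∧ q.IsPath ∧
    x = |Real.log (walkWeight W p * walkWeight W q /
          (walkWeight W p.reverse * walkWeight W q.reverse))|}

/-- The parameterized rates `W_ij = exp(-(B_ij - E_j - F_ij/2))` on the edges of `G`. -/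
noncomputable def rates {V : Type*} (G : SimpleGraph V) (Bp : V → V → ℝ) (Ep : V → ℝ)
    (Fp : V → V → ℝ) : V → V → ℝ :=
  fun i j => if G.Adj i j then Real.exp (-(Bp i j - Ep j - Fp i j / 2)) else 0

/-- Steady state as a function of the parameters. -/
noncomputable def piP {V : Type*} [Fintype V] [DecidableEq V] (G : SimpleGraph V)
    (Bp : V → V → ℝ) (Ep : V → ℝ) (Fp : V → V → ℝ) (k : V) : ℝ :=
  mttPi (rates G Bp Ep Fp) G k

/-- Replace the symmetric edge parameter of the edge `{m,n}` by `t`. -/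
noncomputable def updB {V : Type*} (Bp : V → V → ℝ) (m n : V) (t : ℝ) : V → V → ℝ :=
  fun i j => if (i = m ∧ j = n) ∨ (i = n ∧ j = m) then t else Bp i j

/-- Add `t` to the symmetric edge parameters of all edges in `S`. -/
noncomputable def updBadd {V : Type*} (Bp : V → V → ℝ) (S : Set (Sym2 V)) (t : ℝ) : V → V → ℝ :=
  fun i j => if s(i, j) ∈ S then Bp i j + t else Bp i j

/-- Replace the antisymmetric edge parameter of the edge `{i,j}` by `t`
(and by `-t` in the reverse direction). -/
noncomputable def updF {V : Type*} (Fp : V → V → ℝ) (i j : V) (t : ℝ) : V → V → ℝ :=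
  fun a b => if a = i ∧ b = j then t else if a = j ∧ b = i then -t else Fp a b

/-- The full rate matrix, with diagonal entries fixed by conservation of probability. -/
noncomputable def fullW {V : Type*} [Fintype V] [DecidableEq V] (W : V → V → ℝ) :
    V → V → ℝ :=
  fun i j => if i = j then -∑ l ∈ Finset.univ.filter (fun l => l ≠ j), W l j else W i j

/-!
Shifting `B_e` by `t` for every `e ∈ S` multiplies the weight of a rooted spanning tree by
`exp (-c_T t)` with `c_T = |S ∩ E(T)|`, so `d/dt ln(π_i/π_j)` at `0` is `⟨c⟩_j - ⟨c⟩_i`, where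
`⟨c⟩_k` is the mean of `c_T` for the probability weights `w(T_k) / ∑_T' w(T'_k)`. Rerooting a tree
`T` from `i` to `j` replaces the edges of its path `j → i` by their reversals; doing this in two
spanning trees `T`, `T'` gives `w(T_i) w(T'_j) = ρ w(T'_i) w(T_j)`, where `ρ` is the cycle affinity
of a round trip `i → j → i` along paths, so `ρ ≤ exp F_{i↔j}`. Finally, for two families of
positive weights whose cross ratios are bounded by `exp F`, the means of a function with values in
`[lo, hi]` differ by at most `(hi - lo) tanh (F / 4)`: splitting `c` into `c - lo` and `hi - c`
reduces this to a two-point inequality.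
-/

section WeightedMean

/-- The two-point case `α / (α + β) - γ / (γ + δ) ≤ (u - 1) / (u + 1)`, with cleared
denominators. -/
theorem sub_mul_add_one_le_of_mul_le {u α β γ δ : ℝ} (hu : 1 ≤ u) (hα : 0 ≤ α) (hβ : 0 ≤ β)
    (hγ : 0 ≤ γ) (hδ : 0 ≤ δ) (h : α * δ ≤ u ^ 2 * (β * γ)) :
    (α * δ - β * γ) * (u + 1) ≤ (u - 1) * ((α + β) * (γ + δ)) := by
  suffices 2 * (α * δ - u * (β * γ)) ≤ (u - 1) * (α * γ + β * δ) by nlinarith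
  have hZ : 0 ≤ (u - 1) * (α * γ + β * δ) := by positivity
  rcases le_total (α * δ) (u * (β * γ)) with hle | hgt
  · linarith
  have hY : β * γ ≤ α * δ := le_trans (le_mul_of_one_le_left (by positivity) hu) hgt
  -- `(X - uY)² - (u - 1)² XY = (X - Y) (X - u²Y)` for `X = αδ`, `Y = βγ`
  have hsq : (α * δ - u * (β * γ)) ^ 2 ≤ (u - 1) ^ 2 * ((α * δ) * (β * γ)) := by
    nlinarith [mul_nonpos_of_nonneg_of_nonpos (sub_nonneg.2 hY) (sub_nonpos.2 h)]
  have hAMGM : 4 * ((α * δ) * (β * γ)) ≤ (α * γ + β * δ) ^ 2 := by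
    nlinarith [sq_nonneg (α * γ - β * δ)]
  rw [← sq_le_sq₀ (by linarith) hZ]
  nlinarith [mul_le_mul_of_nonneg_left hAMGM (sq_nonneg (u - 1))]

theorem sum_mul_sum_le_of_mul_le {ι : Type*} {s : Finset ι} {a b f g : ι → ℝ} {K : ℝ}
    (hf : ∀ T ∈ s, 0 ≤ f T) (hg : ∀ T ∈ s, 0 ≤ g T)
    (h : ∀ T ∈ s, ∀ T' ∈ s, a T * b T' ≤ K * (a T' * b T)) :
    (∑ T ∈ s, f T * a T) * (∑ T ∈ s, g T * b T)
      ≤ K * ((∑ T ∈ s, g T * a T) * (∑ T ∈ s, f T * b T)) := by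
  rw [sum_mul_sum, sum_mul_sum, sum_comm, mul_sum]
  refine sum_le_sum fun T hT => ?_
  rw [mul_sum]
  refine sum_le_sum fun T' hT' => ?_
  have := mul_le_mul_of_nonneg_left (h T' hT' T hT) (mul_nonneg (hf T' hT') (hg T hT))
  linarith

theorem weightedMean_sub_le {ι : Type*} {s : Finset ι} (hs : s.Nonempty) {a b c : ι → ℝ}
    {u lo hi : ℝ} (hu : 1 ≤ u) (ha : ∀ T ∈ s, 0 < a T) (hb : ∀ T ∈ s, 0 < b T)
    (hab : ∀ T ∈ s, ∀ T' ∈ s, a T * b T' ≤ u ^ 2 * (a T' * b T))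
    (hc : ∀ T ∈ s, c T ∈ Set.Icc lo hi) :
    (∑ T ∈ s, c T * a T) / (∑ T ∈ s, a T) - (∑ T ∈ s, c T * b T) / (∑ T ∈ s, b T)
      ≤ (hi - lo) * ((u - 1) / (u + 1)) := by
  obtain ⟨T₀, hT₀⟩ := hs
  set A := ∑ T ∈ s, a T
  set B := ∑ T ∈ s, b T
  have hA : 0 < A := sum_pos ha ⟨T₀, hT₀⟩
  have hB : 0 < B := sum_pos hb ⟨T₀, hT₀⟩
  have hlo : ∀ T ∈ s, 0 ≤ c T - lo := fun T hT => sub_nonneg.2 (hc T hT).1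
  have hhi : ∀ T ∈ s, 0 ≤ hi - c T := fun T hT => sub_nonneg.2 (hc T hT).2
  set α := ∑ T ∈ s, (c T - lo) * a T
  set β := ∑ T ∈ s, (hi - c T) * a T
  set γ := ∑ T ∈ s, (c T - lo) * b T
  set δ := ∑ T ∈ s, (hi - c T) * b T
  have hα0 : 0 ≤ α := sum_nonneg fun T hT => mul_nonneg (hlo T hT) (ha T hT).le
  have hβ0 : 0 ≤ β := sum_nonneg fun T hT => mul_nonneg (hhi T hT) (ha T hT).le
  have hγ0 : 0 ≤ γ := sum_nonneg fun T hT => mul_nonneg (hlo T hT) (hb T hT).le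
  have hδ0 : 0 ≤ δ := sum_nonneg fun T hT => mul_nonneg (hhi T hT) (hb T hT).le
  have hαβ : α + β = (hi - lo) * A := by
    rw [← sum_add_distrib, mul_sum]; exact sum_congr rfl fun T _ => by ring
  have hγδ : γ + δ = (hi - lo) * B := by
    rw [← sum_add_distrib, mul_sum]; exact sum_congr rfl fun T _ => by ring
  have hα : ∑ T ∈ s, c T * a T = α + lo * A := by
    rw [mul_sum, ← sum_add_distrib]; exact sum_congr rfl fun T _ => by ring
  have hγ : ∑ T ∈ s, c T * b T = γ + lo * B := by
    rw [mul_sum, ← sum_add_distrib]; exact sum_congr rfl fun T _ => by ring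
  have key : (α * δ - β * γ) * (u + 1) ≤ (u - 1) * ((α + β) * (γ + δ)) :=
    sub_mul_add_one_le_of_mul_le hu hα0 hβ0 hγ0 hδ0 (sum_mul_sum_le_of_mul_le hlo hhi hab)
  have hbound : (α * B - γ * A) * (u + 1) ≤ (u - 1) * ((hi - lo) * (A * B)) := by
    obtain hκ | hκ := (sub_nonneg.2 ((hc T₀ hT₀).1.trans (hc T₀ hT₀).2)).eq_or_lt
    · have hα' : α = 0 := by nlinarith
      have hγ' : γ = 0 := by nlinarith
      simp [hα', hγ', ← hκ]
    · rw [hαβ, hγδ] at key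
      exact le_of_mul_le_mul_left (by linear_combination key - (u + 1) * (α * hγδ - γ * hαβ)) hκ
  rw [hα, hγ, div_sub_div _ _ hA.ne' hB.ne', div_le_iff₀ (mul_pos hA hB)]
  calc _ = α * B - γ * A := by ring
    _ ≤ (u - 1) * ((hi - lo) * (A * B)) / (u + 1) := (le_div_iff₀ (by linarith)).2 hbound
    _ = _ := by ring

theorem Real.tanh_eq_exp_sub_one_div (x : ℝ) :
    Real.tanh x = (Real.exp (2 * x) - 1) / (Real.exp (2 * x) + 1) := by
  rw [Real.tanh_eq, two_mul, Real.exp_add, Real.exp_neg]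
  field_simp

theorem abs_weightedMean_sub_le_tanh {ι : Type*} {s : Finset ι} (hs : s.Nonempty)
    {a b c : ι → ℝ} {F lo hi : ℝ} (ha : ∀ T ∈ s, 0 < a T) (hb : ∀ T ∈ s, 0 < b T)
    (hab : ∀ T ∈ s, ∀ T' ∈ s, a T * b T' ≤ Real.exp F * (a T' * b T))
    (hc : ∀ T ∈ s, c T ∈ Set.Icc lo hi) :
    |(∑ T ∈ s, c T * a T) / (∑ T ∈ s, a T) - (∑ T ∈ s, c T * b T) / (∑ T ∈ s, b T)|
      ≤ (hi - lo) * Real.tanh (F / 4) := by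
  obtain ⟨T₀, hT₀⟩ := hs
  have hF : 0 ≤ F := Real.one_le_exp_iff.1 <| le_of_mul_le_mul_right
    (by simpa using hab T₀ hT₀ T₀ hT₀) (mul_pos (ha T₀ hT₀) (hb T₀ hT₀))
  have hu : 1 ≤ Real.exp (F / 2) := Real.one_le_exp (by linarith)
  have hu2 : Real.exp (F / 2) ^ 2 = Real.exp F := by rw [← Real.exp_nat_mul]; ring_nf
  rw [Real.tanh_eq_exp_sub_one_div, show 2 * (F / 4) = F / 2 by ring, abs_sub_le_iff]
  refine ⟨weightedMean_sub_le ⟨T₀, hT₀⟩ hu ha hb (hu2 ▸ hab) hc,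
    weightedMean_sub_le ⟨T₀, hT₀⟩ hu hb ha (fun T hT T' hT' => ?_) hc⟩
  rw [hu2, mul_comm (b T), mul_comm (b T')]
  exact hab T' hT' T hT

theorem hasDerivAt_log_sum_exp_mul {ι : Type*} (s : Finset ι) (c a : ι → ℝ)
    (ha : 0 < ∑ T ∈ s, a T) :
    HasDerivAt (fun t => Real.log (∑ T ∈ s, Real.exp (-(c T * t)) * a T))
      (-((∑ T ∈ s, c T * a T) / ∑ T ∈ s, a T)) 0 := by
  have hsum : HasDerivAt (fun t => ∑ T ∈ s, Real.exp (-(c T * t)) * a T)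
      (∑ T ∈ s, -c T * a T) 0 :=
    HasDerivAt.fun_sum fun T _ => by
      simpa using (((hasDerivAt_id 0).const_mul (c T)).neg.exp).mul_const (a T)
  convert hsum.log (by simpa using ha.ne') using 1
  simp [neg_div]

end WeightedMean

namespace SimpleGraph

variable {V : Type*} {T : SimpleGraph V}

theorem IsTree.dist_add_one_eq_of_adj_root (hT : T.IsTree) {x y a b : V} (hxy : T.Adj x y)
    (hab : T.Adj a b) (hne : s(a, b) ≠ s(x, y)) (h : T.dist b x + 1 = T.dist a x) :
    T.dist b y + 1 = T.dist a y := by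
  have hax := hT.dist_eq_dist_add_one_of_adj a hxy
  have hbx := hT.dist_eq_dist_add_one_of_adj b hxy
  have hab' := hT.dist_eq_dist_add_one_of_adj y hab
  rw [dist_comm (u := y), dist_comm (u := y)] at hab'
  by_contra hflip
  have hk : T.dist a x = T.dist a y + 1 ∧ T.dist b y = T.dist a y + 1 ∧
      T.dist b x = T.dist a y := by omega
  obtain ⟨p, -, hp⟩ := hT.connected.exists_path_of_dist y a
  obtain ⟨q, -, hq⟩ := hT.connected.exists_path_of_dist b x
  -- both walks from `a` to `x` are geodesics, hence they are the unique path
  have hpq : p.reverse.concat hxy.symm = Walk.cons hab q := by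
    refine (hT.existsUnique_path a x).unique (Walk.isPath_of_length_eq_dist _ ?_)
      (Walk.isPath_of_length_eq_dist _ ?_)
    · rw [Walk.length_concat, Walk.length_reverse, hp, dist_comm]; omega
    · rw [Walk.length_cons, hq]; omega
  have hb : b ∈ (p.reverse.concat hxy.symm).support := by simp [hpq]
  rw [Walk.support_concat, List.mem_append, List.mem_singleton, Walk.support_reverse,
    List.mem_reverse] at hb
  rcases hb with hb | rfl
  · have := (dist_le (p.takeUntil b hb)).trans (p.length_takeUntil_le_length hb)
    rw [hp, dist_comm (u := y), dist_comm (u := y)] at this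
    omega
  · rw [dist_self] at hk
    have : a = y := hT.connected.dist_eq_zero_iff.1 hk.2.2.symm
    exact hne (this ▸ Sym2.eq_swap)

variable [Fintype V]

noncomputable def rootedEdges (T : SimpleGraph V) (r : V) : Finset (V × V) :=
  univ.filter fun p : V × V => T.Adj p.1 p.2 ∧ T.dist p.2 r + 1 = T.dist p.1 r

@[simp]
theorem mem_rootedEdges {r : V} {p : V × V} :
    p ∈ T.rootedEdges r ↔ T.Adj p.1 p.2 ∧ T.dist p.2 r + 1 = T.dist p.1 r := by
  simp [rootedEdges]

theorem IsTree.rootedEdges_of_adj (hT : T.IsTree) {x y : V} (hxy : T.Adj x y) :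
    T.rootedEdges x = insert (y, x) ((T.rootedEdges y).erase (x, y)) := by
  ext ⟨a, b⟩
  simp only [mem_insert, mem_erase, mem_rootedEdges, Prod.mk.injEq, ne_eq]
  constructor
  · rintro ⟨hab, hd⟩
    by_cases hedge : s(a, b) = s(x, y)
    · rcases Sym2.eq_iff.1 hedge with ⟨rfl, rfl⟩ | ⟨rfl, rfl⟩
      · simp at hd
      · exact Or.inl ⟨rfl, rfl⟩
    · refine Or.inr ⟨fun ⟨ha, hb⟩ => hedge (by rw [ha, hb]), hab,
        hT.dist_add_one_eq_of_adj_root hxy hab hedge hd⟩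
  · rintro (⟨rfl, rfl⟩ | ⟨hne, hab, hd⟩)
    · simp [hxy.symm, dist_eq_one_iff_adj.2 hxy.symm]
    · refine ⟨hab, hT.dist_add_one_eq_of_adj_root hxy.symm hab ?_ hd⟩
      rintro hedge
      rcases Sym2.eq_iff.1 hedge with ⟨rfl, rfl⟩ | ⟨rfl, rfl⟩
      · simp at hd
      · exact hne ⟨rfl, rfl⟩

theorem IsTree.prod_rootedEdges {M : Type*} [CommMonoid M] (hT : T.IsTree) (r : V)
    (g : Sym2 V → M) : ∏ p ∈ T.rootedEdges r, g s(p.1, p.2) = ∏ e ∈ T.edgeFinset, g e := by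
  refine prod_bij (fun p _ => s(p.1, p.2)) (fun p hp => by simpa using (mem_rootedEdges.1 hp).1)
    ?_ ?_ fun _ _ => rfl
  · rintro ⟨a, b⟩ hp ⟨a', b'⟩ hp' hedge
    obtain ⟨-, hd⟩ := mem_rootedEdges.1 hp
    obtain ⟨-, hd'⟩ := mem_rootedEdges.1 hp'
    rcases Sym2.eq_iff.1 hedge with ⟨rfl, rfl⟩ | ⟨rfl, rfl⟩
    · rfl
    · dsimp only at hd hd'
      omega
  · intro e he
    induction e with
    | _ a b =>
      rw [mem_edgeFinset, mem_edgeSet] at he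
      rcases hT.dist_eq_dist_add_one_of_adj r he with hd | hd <;>
        simp only [dist_comm (u := r)] at hd
      · exact ⟨(a, b), mem_rootedEdges.2 ⟨he, hd.symm⟩, rfl⟩
      · exact ⟨(b, a), mem_rootedEdges.2 ⟨he.symm, hd.symm⟩, Sym2.eq_swap⟩

end SimpleGraph

section TreeWeight

open SimpleGraph

variable {V : Type*}

section WalkWeight

variable {W : V → V → ℝ} {G : SimpleGraph V}

@[simp]
theorem walkWeight_nil {u : V} : walkWeight W (Walk.nil : G.Walk u u) = 1 := by
  simp [walkWeight]

@[simp]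
theorem walkWeight_cons {u v w : V} (h : G.Adj u v) (p : G.Walk v w) :
    walkWeight W (Walk.cons h p) = W v u * walkWeight W p := by
  simp [walkWeight]

theorem walkWeight_append {u v w : V} (p : G.Walk u v) (q : G.Walk v w) :
    walkWeight W (p.append q) = walkWeight W p * walkWeight W q := by
  simp [walkWeight, Walk.darts_append]

@[simp]
theorem walkWeight_mapLe {G' : SimpleGraph V} (h : G ≤ G') {u v : V} (p : G.Walk u v) :
    walkWeight W (p.mapLe h) = walkWeight W p := by
  simp only [walkWeight, Walk.mapLe, Walk.darts_map, List.map_map]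
  rfl

theorem walkWeight_pos (hW : ∀ a b, G.Adj a b → 0 < W a b) {u v : V} (p : G.Walk u v) :
    0 < walkWeight W p := by
  induction p with
  | nil => simp
  | cons h _ ih => simpa using mul_pos (hW _ _ h.symm) ih

end WalkWeight

variable [Fintype V] {W : V → V → ℝ}

theorem treeWeight_eq_prod_rootedEdges (W : V → V → ℝ) (T : SimpleGraph V) (r : V) :
    treeWeight W T r = ∏ p ∈ T.rootedEdges r, W p.2 p.1 :=
  rfl

theorem treeWeight_pos {T : SimpleGraph V} (hW : ∀ a b, T.Adj a b → 0 < W a b) (r : V) :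
    0 < treeWeight W T r :=
  prod_pos fun _ hp => hW _ _ (mem_rootedEdges.1 hp).1.symm

theorem SimpleGraph.IsTree.treeWeight_mul_of_adj {T : SimpleGraph V} (hT : T.IsTree) {x y : V}
    (hxy : T.Adj x y) (W : V → V → ℝ) : treeWeight W T x * W y x = treeWeight W T y * W x y := by
  have hxy_mem : (x, y) ∈ T.rootedEdges y := by simp [hxy, dist_eq_one_iff_adj.2 hxy]
  have hyx_not : (y, x) ∉ (T.rootedEdges y).erase (x, y) := by simp
  rw [treeWeight_eq_prod_rootedEdges, treeWeight_eq_prod_rootedEdges, hT.rootedEdges_of_adj hxy,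
    prod_insert hyx_not, ← mul_prod_erase _ _ hxy_mem]
  ring

theorem SimpleGraph.IsTree.treeWeight_mul_walkWeight_reverse {T : SimpleGraph V}
    (hT : T.IsTree) (W : V → V → ℝ) {i j : V} (Q : T.Walk j i) :
    treeWeight W T i * walkWeight W Q.reverse = treeWeight W T j * walkWeight W Q := by
  induction Q with
  | nil => simp
  | @cons u v w h q ih =>
    rw [Walk.reverse_cons, walkWeight_append, walkWeight_cons, walkWeight_cons, walkWeight_nil]
    linear_combination W u v * ih - walkWeight W q * hT.treeWeight_mul_of_adj h W

theorem log_le_Fbtw (W : V → V → ℝ) {G : SimpleGraph V} {i j : V} {p : G.Walk i j}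
    {q : G.Walk j i} (hp : p.IsPath) (hq : q.IsPath) :
    Real.log (walkWeight W p * walkWeight W q / (walkWeight W p.reverse * walkWeight W q.reverse))
      ≤ Fbtw W G i j := by
  have hbdd : BddAbove {x : ℝ | ∃ (p : G.Walk i j) (q : G.Walk j i), p.IsPath ∧ q.IsPath ∧
      x = |Real.log (walkWeight W p * walkWeight W q /
        (walkWeight W p.reverse * walkWeight W q.reverse))|} := by
    refine (Set.finite_range fun pq : G.Path i j × G.Path j i =>
      |Real.log (walkWeight W pq.1.1 * walkWeight W pq.2.1 /
        (walkWeight W pq.1.1.reverse * walkWeight W pq.2.1.reverse))|).subset ?_ |>.bddAbove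
    rintro x ⟨p, q, hp, hq, rfl⟩
    exact ⟨(⟨p, hp⟩, ⟨q, hq⟩), rfl⟩
  exact (le_abs_self _).trans (le_csSup hbdd ⟨p, q, hp, hq, rfl⟩)

theorem treeWeight_mul_treeWeight_le {G T T' : SimpleGraph V} (hW : ∀ a b, G.Adj a b → 0 < W a b)
    (hT : IsSpanningTree G T) (hT' : IsSpanningTree G T') (i j : V) :
    treeWeight W T i * treeWeight W T' j
      ≤ Real.exp (Fbtw W G i j) * (treeWeight W T' i * treeWeight W T j) := by
  have hWT : ∀ a b, T.Adj a b → 0 < W a b := fun a b h => hW a b (hT.1 h)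
  have hWT' : ∀ a b, T'.Adj a b → 0 < W a b := fun a b h => hW a b (hT'.1 h)
  obtain ⟨Q, hQ, -⟩ := hT.2.existsUnique_path j i
  obtain ⟨P, hP, -⟩ := hT'.2.existsUnique_path i j
  set ρ := walkWeight W P * walkWeight W Q / (walkWeight W P.reverse * walkWeight W Q.reverse)
  have hρ : 0 < ρ := div_pos (mul_pos (walkWeight_pos hWT' P) (walkWeight_pos hWT Q))
    (mul_pos (walkWeight_pos hWT' P.reverse) (walkWeight_pos hWT Q.reverse))
  have hρF : Real.log ρ ≤ Fbtw W G i j := by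
    simpa only [Walk.reverse_mapLe, walkWeight_mapLe] using
      log_le_Fbtw W (hP.mapLe hT'.1) (hQ.mapLe hT.1)
  have hreroot :
      treeWeight W T i * treeWeight W T' j = ρ * (treeWeight W T' i * treeWeight W T j) := by
    simp only [ρ]
    field_simp [(walkWeight_pos hWT' P.reverse).ne', (walkWeight_pos hWT Q.reverse).ne']
    linear_combination treeWeight W T' j * walkWeight W P.reverse *
        hT.2.treeWeight_mul_walkWeight_reverse W Q +
      treeWeight W T j * walkWeight W Q * hT'.2.treeWeight_mul_walkWeight_reverse W P
  rw [hreroot]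
  gcongr
  · exact (mul_pos (treeWeight_pos hWT' i) (treeWeight_pos hWT j)).le
  · exact (Real.log_le_iff_le_exp hρ).1 hρF

end TreeWeight

section Parametrization

variable {V : Type*}

theorem rates_pos {G : SimpleGraph V} (Bp : V → V → ℝ) (Ep : V → ℝ) (Fp : V → V → ℝ) {a b : V}
    (h : G.Adj a b) : 0 < rates G Bp Ep Fp a b := by
  rw [rates, if_pos h]
  exact Real.exp_pos _

theorem rates_updBadd {G : SimpleGraph V} (Bp : V → V → ℝ) (Ep : V → ℝ) (Fp : V → V → ℝ)
    (S : Set (Sym2 V)) (t : ℝ) {a b : V} (h : G.Adj a b) :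
    rates G (updBadd Bp S t) Ep Fp a b
      = (if s(a, b) ∈ S then Real.exp (-t) else 1) * rates G Bp Ep Fp a b := by
  simp only [rates, updBadd, if_pos h]
  split_ifs
  · rw [← Real.exp_add]; ring_nf
  · rw [one_mul]

theorem treeWeight_updBadd [Fintype V] {G T : SimpleGraph V} (hT : IsSpanningTree G T)
    (Bp : V → V → ℝ) (Ep : V → ℝ) (Fp : V → V → ℝ) (S : Set (Sym2 V)) (t : ℝ) (k : V) :
    treeWeight (rates G (updBadd Bp S t) Ep Fp) T k
      = Real.exp (-((S ∩ T.edgeSet).ncard * t)) * treeWeight (rates G Bp Ep Fp) T k := by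
  have hfactor : ∀ p ∈ T.rootedEdges k, rates G (updBadd Bp S t) Ep Fp p.2 p.1
      = (if s(p.1, p.2) ∈ S then Real.exp (-t) else 1) * rates G Bp Ep Fp p.2 p.1 := by
    rintro ⟨a, b⟩ hp
    rw [rates_updBadd Bp Ep Fp S t (hT.1 (SimpleGraph.mem_rootedEdges.1 hp).1.symm),
      Sym2.eq_swap]
  have hcard : (S ∩ T.edgeSet).ncard = (T.edgeFinset.filter (· ∈ S)).card := by
    rw [← Set.ncard_coe_finset]
    congr 1
    ext e
    simp [and_comm]
  rw [treeWeight_eq_prod_rootedEdges, treeWeight_eq_prod_rootedEdges, prod_congr rfl hfactor,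
    prod_mul_distrib, hT.2.prod_rootedEdges k fun e => if e ∈ S then Real.exp (-t) else 1,
    prod_ite, prod_const_one, mul_one, prod_const, ← Real.exp_nat_mul, hcard]
  ring_nf

variable [Fintype V] [DecidableEq V]

noncomputable def spanningTrees (G : SimpleGraph V) : Finset (SimpleGraph V) :=
  univ.filter fun T : SimpleGraph V => IsSpanningTree G T

@[simp]
theorem mem_spanningTrees {G T : SimpleGraph V} : T ∈ spanningTrees G ↔ IsSpanningTree G T := by
  simp [spanningTrees]

theorem sumTrees_eq_sum_spanningTrees (W : V → V → ℝ) (G : SimpleGraph V) (k : V) :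
    sumTrees W G k = ∑ T ∈ spanningTrees G, treeWeight W T k :=
  rfl

theorem sumTrees_pos {W : V → V → ℝ} {G : SimpleGraph V} (hW : ∀ a b, G.Adj a b → 0 < W a b)
    (hG : ∃ T, IsSpanningTree G T) (k : V) : 0 < sumTrees W G k := by
  obtain ⟨T₀, hT₀⟩ := hG
  rw [sumTrees_eq_sum_spanningTrees]
  exact sum_pos (fun T hT => treeWeight_pos (fun a b h => hW a b ((mem_spanningTrees.1 hT).1 h)) k)
    ⟨T₀, mem_spanningTrees.2 hT₀⟩

theorem log_mttPi_div_mttPi {W : V → V → ℝ} {G : SimpleGraph V}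
    (hW : ∀ a b, G.Adj a b → 0 < W a b) (hG : ∃ T, IsSpanningTree G T) (i j : V) :
    Real.log (mttPi W G i / mttPi W G j)
      = Real.log (sumTrees W G i) - Real.log (sumTrees W G j) := by
  have hZ : 0 < ∑ l : V, sumTrees W G l :=
    sum_pos (fun l _ => sumTrees_pos hW hG l) ⟨i, mem_univ i⟩
  rw [mttPi, mttPi, div_div_div_cancel_right₀ hZ.ne',
    Real.log_div (sumTrees_pos hW hG i).ne' (sumTrees_pos hW hG j).ne']

theorem sumTrees_updBadd {G : SimpleGraph V} (Bp : V → V → ℝ) (Ep : V → ℝ) (Fp : V → V → ℝ)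
    (S : Set (Sym2 V)) (t : ℝ) (k : V) :
    sumTrees (rates G (updBadd Bp S t) Ep Fp) G k
      = ∑ T ∈ spanningTrees G,
          Real.exp (-((S ∩ T.edgeSet).ncard * t)) * treeWeight (rates G Bp Ep Fp) T k :=
  sum_congr rfl fun _ hT => treeWeight_updBadd (mem_spanningTrees.1 hT) Bp Ep Fp S t k

end Parametrization

theorem stmt10_general {V : Type*} [Fintype V] [DecidableEq V]
    (G : SimpleGraph V)
    (Bp : V → V → ℝ) (Ep : V → ℝ) (Fp : V → V → ℝ)
    (S : Set (Sym2 V))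
    (cmax cmin : ℕ)
    (hcmax : IsGreatest {c : ℕ | ∃ T : SimpleGraph V,
      IsSpanningTree G T ∧ (S ∩ T.edgeSet).ncard = c} cmax)
    (hcmin : IsLeast {c : ℕ | ∃ T : SimpleGraph V,
      IsSpanningTree G T ∧ (S ∩ T.edgeSet).ncard = c} cmin)
    (i j : V) :
    |deriv (fun t =>
        Real.log (piP G (updBadd Bp S t) Ep Fp i /
                  piP G (updBadd Bp S t) Ep Fp j)) 0|
      ≤ ((cmax : ℝ) - (cmin : ℝ)) *
          Real.tanh (Fbtw (rates G Bp Ep Fp) G i j / 4) := by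
  set W := rates G Bp Ep Fp
  have hW : ∀ a b, G.Adj a b → 0 < W a b := fun _ _ h => rates_pos Bp Ep Fp h
  have hG : ∃ T, IsSpanningTree G T := hcmax.1.imp fun _ hT => hT.1
  have hne : (spanningTrees G).Nonempty := hG.imp fun _ hT => mem_spanningTrees.2 hT
  have hw : ∀ k, ∀ T ∈ spanningTrees G, 0 < treeWeight W T k := fun k T hT =>
    treeWeight_pos (fun a b h => hW a b ((mem_spanningTrees.1 hT).1 h)) k
  have hderiv : ∀ k, HasDerivAt (fun t => Real.log (sumTrees (rates G (updBadd Bp S t) Ep Fp) G k))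
      (-((∑ T ∈ spanningTrees G, ((S ∩ T.edgeSet).ncard : ℝ) * treeWeight W T k)
        / ∑ T ∈ spanningTrees G, treeWeight W T k)) 0 := fun k => by
    simp_rw [sumTrees_updBadd]
    exact hasDerivAt_log_sum_exp_mul _ _ _ (sum_pos (hw k) hne)
  have hlog : (fun t => Real.log (piP G (updBadd Bp S t) Ep Fp i / piP G (updBadd Bp S t) Ep Fp j))
      = fun t => Real.log (sumTrees (rates G (updBadd Bp S t) Ep Fp) G i)
          - Real.log (sumTrees (rates G (updBadd Bp S t) Ep Fp) G j) :=
    funext fun _ => log_mttPi_div_mttPi (fun _ _ h => rates_pos _ Ep Fp h) hG i j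
  rw [hlog, ((hderiv i).fun_sub (hderiv j)).deriv, neg_sub_neg, abs_sub_comm]
  refine abs_weightedMean_sub_le_tanh hne (hw i) (hw j)
    (fun T hT T' hT' => treeWeight_mul_treeWeight_le hW (mem_spanningTrees.1 hT)
      (mem_spanningTrees.1 hT') i j) fun T hT => ?_
  have hc : (S ∩ T.edgeSet).ncard ∈ {c : ℕ | ∃ T : SimpleGraph V,
      IsSpanningTree G T ∧ (S ∩ T.edgeSet).ncard = c} := ⟨T, mem_spanningTrees.1 hT, rfl⟩
  exact ⟨Nat.cast_le.2 (hcmin.2 hc), Nat.cast_le.2 (hcmax.2 hc)⟩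

/-- multi-edge bound. The response of `ln(π_i/π_j)` to the
simultaneous perturbation of the symmetric edge parameters of the edges in
`S` (i.e. the sum of the single-edge responses) is bounded by
`(c_max - c_min) tanh(F_{i↔j}/4)`. -/
theorem stmt10 {V : Type*} [Fintype V] [DecidableEq V]
    (G : SimpleGraph V) (hG : G.Connected)
    (Bp : V → V → ℝ) (Ep : V → ℝ) (Fp : V → V → ℝ)
    (hB : ∀ i j, Bp i j = Bp j i) (hF : ∀ i j, Fp i j = -Fp j i)
    (S : Set (Sym2 V)) (hS : S ⊆ G.edgeSet)
    (cmax cmin : ℕ)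
    (hcmax : IsGreatest {c : ℕ | ∃ T : SimpleGraph V,
      IsSpanningTree G T ∧ (S ∩ T.edgeSet).ncard = c} cmax)
    (hcmin : IsLeast {c : ℕ | ∃ T : SimpleGraph V,
      IsSpanningTree G T ∧ (S ∩ T.edgeSet).ncard = c} cmin)
    (i j : V) :
    |deriv (fun t =>
        Real.log (piP G (updBadd Bp S t) Ep Fp i /
                  piP G (updBadd Bp S t) Ep Fp j)) 0|
      ≤ ((cmax : ℝ) - (cmin : ℝ)) *
          Real.tanh (Fbtw (rates G Bp Ep Fp) G i j / 4) :=
  stmt10_general G Bp Ep Fp S cmax cmin hcmax hcmin i j
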